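/- For every positive integer n, h(n) is odd if and only if n is a perfect square or twice a perfect square (i.e., n = x² or n = 2x² for some positive integer x). -/

import Mathlib

/-!
Since `h(n) ≡ |B_n| + |C_n| (mod 2)`, it suffices that `|B_n|, |C_n| ≤ 1` and that they are not
both `1`: a square is never twice a nonzero square, by comparing the exponent of `2` on both sides.
-/

/-- The set `A_n` of pairs `(x, y)` of positive integers with `n = x(x+y)` and `1 ≤ y ≤ x-1`. -/
def lerchA (n : ℕ) : Finset (ℕ × ℕ) :=
  (Finset.range (n + 1) ×ˢ Finset.range (n + 1)).filter
    (fun p => 0 < p.1 ∧ 1 ≤ p.2 ∧ p.2 ≤ p.1 - 1 ∧ n = p.1 * (p.1 + p.2))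

/-- The set `B_n` of positive integers `x` with `n = x²`. -/
def lerchB (n : ℕ) : Finset ℕ :=
  (Finset.range (n + 1)).filter (fun x => 0 < x ∧ n = x ^ 2)

/-- The set `C_n` of positive integers `x` with `n = 2x²`. -/
def lerchC (n : ℕ) : Finset ℕ :=
  (Finset.range (n + 1)).filter (fun x => 0 < x ∧ n = 2 * x ^ 2)

/-- `h(n) = 2·|A_n| + |B_n| + |C_n|`, the `n`-th coefficient of the half Lerch sum. -/
def lerchh (n : ℕ) : ℕ := 2 * (lerchA n).card + (lerchB n).card + (lerchC n).card

theorem Nat.sq_ne_two_mul_sq (x : ℕ) {y : ℕ} (hy : y ≠ 0) : x ^ 2 ≠ 2 * y ^ 2 := by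
  intro h
  have hx : (x ^ 2).factorization 2 = 2 * x.factorization 2 := by
    simp [Nat.factorization_pow]
  have hy2 : (2 * y ^ 2).factorization 2 = 1 + 2 * y.factorization 2 := by
    rw [Nat.factorization_mul two_ne_zero (pow_ne_zero _ hy), Nat.factorization_pow]
    simp [Nat.prime_two.factorization_self]
  rw [h, hy2] at hx
  omega

section Lerch

open Finset

variable {n x : ℕ}

theorem mem_lerchB : x ∈ lerchB n ↔ 0 < x ∧ n = x ^ 2 := by
  simp only [lerchB, mem_filter, mem_range, and_iff_right_iff_imp]
  rintro ⟨-, rfl⟩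
  have := Nat.le_self_pow two_ne_zero x
  omega

theorem mem_lerchC : x ∈ lerchC n ↔ 0 < x ∧ n = 2 * x ^ 2 := by
  simp only [lerchC, mem_filter, mem_range, and_iff_right_iff_imp]
  rintro ⟨-, rfl⟩
  have := Nat.le_self_pow two_ne_zero x
  omega

theorem card_lerchB_le_one : #(lerchB n) ≤ 1 :=
  card_le_one.mpr fun a ha b hb => by
    rw [mem_lerchB] at ha hb
    exact Nat.pow_left_injective two_ne_zero (by omega : a ^ 2 = b ^ 2)

theorem card_lerchC_le_one : #(lerchC n) ≤ 1 :=
  card_le_one.mpr fun a ha b hb => by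
    rw [mem_lerchC] at ha hb
    exact Nat.pow_left_injective two_ne_zero (by omega : a ^ 2 = b ^ 2)

theorem card_lerchB_pos_iff : 0 < #(lerchB n) ↔ ∃ x : ℕ, 0 < x ∧ n = x ^ 2 := by
  simp only [card_pos, Finset.Nonempty, mem_lerchB]

theorem card_lerchC_pos_iff : 0 < #(lerchC n) ↔ ∃ x : ℕ, 0 < x ∧ n = 2 * x ^ 2 := by
  simp only [card_pos, Finset.Nonempty, mem_lerchC]

theorem not_card_lerchB_pos_and_card_lerchC_pos : ¬(0 < #(lerchB n) ∧ 0 < #(lerchC n)) := by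
  rw [card_lerchB_pos_iff, card_lerchC_pos_iff]
  rintro ⟨⟨x, -, rfl⟩, ⟨y, hy, hxy⟩⟩
  exact Nat.sq_ne_two_mul_sq x hy.ne' hxy

end Lerch

theorem h_odd_iff_general (n : ℕ) :
    Odd (lerchh n) ↔
      (∃ x : ℕ, 0 < x ∧ n = x ^ 2) ∨ (∃ x : ℕ, 0 < x ∧ n = 2 * x ^ 2) := by
  rw [← card_lerchB_pos_iff, ← card_lerchC_pos_iff, lerchh, Nat.odd_iff]
  have hB := card_lerchB_le_one (n := n)
  have hC := card_lerchC_le_one (n := n)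
  have hBC := not_card_lerchB_pos_and_card_lerchC_pos (n := n)
  omega

/-- For every positive integer `n`, `h(n)` is odd iff `n` is a perfect square or
twice a perfect square. -/
theorem h_odd_iff (n : ℕ) (hn : 0 < n) :
    Odd (lerchh n) ↔
      (∃ x : ℕ, 0 < x ∧ n = x ^ 2) ∨ (∃ x : ℕ, 0 < x ∧ n = 2 * x ^ 2) :=
  h_odd_iff_general n
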